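/- arXiv:2407.16343 — 4 statements merged into one kernel-verified Lean document; each statement's English description precedes it below -/
import Mathlib

section
/- Let r ∈ ℝ with 0 < r < 1. For every nonzero z ∈ ℂ the following are equivalent: (i) there exists a nonzero λ ∈ ℂ with |λ| = 1 and r(λ + λ⁻¹) = z + z⁻¹; (ii) |z| = 1 and |Re z| ≤ r. -/
/-!
On the unit circle `l + l⁻¹ = 2 Re l`, so (i) says that `z + z⁻¹` is the real number
`2 r Re l`, of modulus at most `2`. A nonzero `z` with `z + z⁻¹` real of modulus at most `2`
lies on the unit circle, and there `z + z⁻¹ = 2 Re z`; hence (i) amounts to `Re z = r Re l`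
for some `l` on the unit circle, which is (ii), with `l = exp (i arccos (Re z / r))`.
-/

open Complex

namespace Complex

theorem add_inv_eq_two_mul_re {z : ℂ} (hz : ‖z‖ = 1) : z + z⁻¹ = 2 * z.re := by
  rw [inv_eq_conj hz, add_conj]
  push_cast
  ring

theorem norm_eq_one_of_add_inv_eq_ofReal {z : ℂ} {t : ℝ} (hz : z ≠ 0) (h : z + z⁻¹ = t)
    (ht : |t| ≤ 2) : ‖z‖ = 1 := by
  have hquad : z * z + 1 = t * z := by
    rw [← h]
    field_simp
  have hre : z.re * z.re - z.im * z.im + 1 = t * z.re := by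
    simpa using congrArg re hquad
  have him : z.re * z.im + z.im * z.re = t * z.im := by
    simpa using congrArg im hquad
  suffices z.re ^ 2 + z.im ^ 2 = 1 by
    rw [norm_def, normSq_apply, ← sq, ← sq, this, Real.sqrt_one]
  by_cases him0 : z.im = 0
  · have : t * z.re ≤ 2 * |z.re| :=
      calc t * z.re ≤ |t| * |z.re| := by rw [← abs_mul]; exact le_abs_self _
        _ ≤ 2 * |z.re| := by gcongr
    rw [him0] at hre ⊢
    nlinarith [sq_abs z.re, sq_nonneg (|z.re| - 1)]
  · have ht2 : t = 2 * z.re := by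
      apply mul_right_cancel₀ him0
      linarith
    rw [ht2] at hre
    linarith

theorem exists_norm_eq_one_re_eq {c : ℝ} (hc : |c| ≤ 1) : ∃ l : ℂ, ‖l‖ = 1 ∧ l.re = c := by
  obtain ⟨hc₁, hc₂⟩ := abs_le.mp hc
  exact ⟨exp (Real.arccos c * I), norm_exp_ofReal_mul_I _,
    by rw [exp_ofReal_mul_I_re, Real.cos_arccos hc₁ hc₂]⟩

end Complex

theorem stmt_1 (r : ℝ) (hr0 : 0 < r) (hr1 : r < 1) :
    ∀ z : ℂ, z ≠ 0 →
      ((∃ l : ℂ, l ≠ 0 ∧ ‖l‖ = 1 ∧ (r : ℂ) * (l + l⁻¹) = z + z⁻¹) ↔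
        (‖z‖ = 1 ∧ |z.re| ≤ r)) := by
  intro z hz
  constructor
  · rintro ⟨l, -, hl, heq⟩
    rw [add_inv_eq_two_mul_re hl] at heq
    have hlre : |l.re| ≤ 1 := hl ▸ abs_re_le_norm l
    have hrl : |r * (2 * l.re)| ≤ 2 := by
      rw [abs_mul, abs_mul, abs_two, abs_of_pos hr0]
      nlinarith [abs_nonneg l.re]
    have hzn : ‖z‖ = 1 :=
      norm_eq_one_of_add_inv_eq_ofReal hz (by push_cast; exact heq.symm) hrl
    rw [add_inv_eq_two_mul_re hzn] at heq
    have hzre : z.re = r * l.re := by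
      have : r * (2 * l.re) = 2 * z.re := by exact_mod_cast heq
      linarith
    refine ⟨hzn, ?_⟩
    rw [hzre, abs_mul, abs_of_pos hr0]
    exact mul_le_of_le_one_right hr0.le hlre
  · rintro ⟨hzn, hzre⟩
    obtain ⟨l, hl, hlre⟩ := exists_norm_eq_one_re_eq (c := z.re / r) (by
      rw [abs_div, abs_of_pos hr0, div_le_one hr0]
      exact hzre)
    refine ⟨l, ne_zero_of_norm_ne_zero (hl ▸ one_ne_zero), hl, ?_⟩
    rw [add_inv_eq_two_mul_re hl, add_inv_eq_two_mul_re hzn, hlre]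
    have : r * (2 * (z.re / r)) = 2 * z.re := by field_simp
    exact_mod_cast this
end

section
/- Let r ∈ ℝ with r > 1 and q₀ = √(r² − 1). For every nonzero z ∈ ℂ the following are equivalent: (i) there exists a nonzero λ ∈ ℂ with |λ| = 1 and r(λ + λ⁻¹) = z + z⁻¹; (ii) |z| = 1, or (Im z = 0 and r − q₀ ≤ |z| ≤ r + q₀). -/
/-!
On the unit circle `l⁻¹ = conj l`, so `r (l + l⁻¹) = 2 r Re l` sweeps out exactly the real segment
`[-2r, 2r]`. Since `Im (z + z⁻¹) = Im z (1 - |z|⁻²)`, the number `z + z⁻¹` is real iff `z` is real or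
unimodular. Unimodular `z` give `2 Re z ∈ [-2, 2] ⊆ [-2r, 2r]`; a real `x ≠ 0` gives
`|x + x⁻¹| = |x| + |x|⁻¹`, which is at most `2r` iff `|x|` lies between the roots `r ± q₀` of
`t² - 2rt + 1`.
-/

open Complex

namespace Complex

theorem add_inv_eq_two_mul_re_of_norm_eq_one {l : ℂ} (hl : ‖l‖ = 1) :
    l + l⁻¹ = (2 * l.re : ℝ) := by
  rw [inv_eq_conj hl, add_conj]

theorem exists_norm_eq_one_mul_add_inv_eq_iff {r : ℝ} (hr : 0 < r) (w : ℂ) :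
    (∃ l : ℂ, ‖l‖ = 1 ∧ r * (l + l⁻¹) = w) ↔ w.im = 0 ∧ |w.re| ≤ 2 * r := by
  constructor
  · rintro ⟨l, hl, rfl⟩
    rw [add_inv_eq_two_mul_re_of_norm_eq_one hl, ← ofReal_mul, ofReal_re, ofReal_im]
    refine ⟨rfl, ?_⟩
    have := abs_re_le_norm l
    rw [abs_mul, abs_of_pos hr, abs_mul, abs_two]
    nlinarith
  · rintro ⟨him, hre⟩
    have h2r : 0 < 2 * r := by positivity
    have hmem : w.re / (2 * r) ∈ Set.Icc (-1 : ℝ) 1 := by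
      rwa [Set.mem_Icc, ← abs_le, abs_div, abs_of_pos h2r, div_le_one h2r]
    refine ⟨exp (Real.arccos (w.re / (2 * r)) * I), norm_exp_ofReal_mul_I _, ?_⟩
    rw [add_inv_eq_two_mul_re_of_norm_eq_one (norm_exp_ofReal_mul_I _), exp_ofReal_mul_I_re,
      Real.cos_arccos hmem.1 hmem.2, ← ofReal_mul, ← mul_assoc, mul_comm r 2, mul_div_cancel₀ _ h2r.ne']
    exact Complex.ext rfl him.symm

theorem im_add_inv_eq_zero_iff (z : ℂ) : (z + z⁻¹).im = 0 ↔ z.im = 0 ∨ ‖z‖ = 1 := by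
  have : (z + z⁻¹).im = z.im * (1 - (‖z‖ ^ 2)⁻¹) := by
    rw [add_im, inv_im, normSq_eq_norm_sq]; ring
  rw [this, mul_eq_zero, sub_eq_zero, eq_comm (a := (1 : ℝ)), inv_eq_one,
    pow_eq_one_iff_of_nonneg (norm_nonneg z) two_ne_zero]

end Complex

theorem abs_add_inv (x : ℝ) : |x + x⁻¹| = |x| + |x|⁻¹ := by
  rcases le_total 0 x with hx | hx
  · rw [abs_of_nonneg hx, abs_of_nonneg (add_nonneg hx (inv_nonneg.2 hx))]
  · rw [abs_of_nonpos hx, abs_of_nonpos (add_nonpos hx (inv_nonpos.2 hx)), neg_add, inv_neg]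

theorem add_inv_le_two_mul_iff {t r q : ℝ} (ht : 0 < t) (hq : 0 ≤ q) (hqr : q ^ 2 = r ^ 2 - 1) :
    t + t⁻¹ ≤ 2 * r ↔ r - q ≤ t ∧ t ≤ r + q := by
  have hfactor : (t - (r - q)) * (t - (r + q)) = t * (t + t⁻¹ - 2 * r) := by
    field_simp
    linear_combination -hqr
  rw [← sub_nonpos, ← mul_le_mul_iff_of_pos_left ht, mul_zero, ← hfactor]
  constructor
  · intro h
    constructor <;> nlinarith
  · rintro ⟨h₁, h₂⟩
    exact mul_nonpos_of_nonneg_of_nonpos (sub_nonneg.2 h₁) (sub_nonpos.2 h₂)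

theorem stmt_3 (r : ℝ) (hr : 1 < r) (q₀ : ℝ) (hq₀ : q₀ = Real.sqrt (r ^ 2 - 1)) :
    ∀ z : ℂ, z ≠ 0 →
      ((∃ l : ℂ, l ≠ 0 ∧ ‖l‖ = 1 ∧ (r : ℂ) * (l + l⁻¹) = z + z⁻¹) ↔
        (‖z‖ = 1 ∨
          (z.im = 0 ∧ r - q₀ ≤ ‖z‖ ∧ ‖z‖ ≤ r + q₀))) := by
  intro z hz
  have hq₀_nonneg : 0 ≤ q₀ := hq₀ ▸ Real.sqrt_nonneg _
  have hq₀_sq : q₀ ^ 2 = r ^ 2 - 1 := by rw [hq₀, Real.sq_sqrt (by nlinarith)]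
  have hl : ∀ l : ℂ, ‖l‖ = 1 → l ≠ 0 := fun _ h => norm_ne_zero_iff.1 (h ▸ one_ne_zero)
  rw [exists_congr fun l => and_iff_right_of_imp fun h => hl l h.1,
    exists_norm_eq_one_mul_add_inv_eq_iff (by linarith), im_add_inv_eq_zero_iff]
  rcases eq_or_ne ‖z‖ 1 with hz₁ | hz₁
  · simp only [hz₁, or_true, true_or, true_and, iff_true]
    rw [add_inv_eq_two_mul_re_of_norm_eq_one hz₁, ofReal_re, abs_mul, abs_two]
    linarith [(abs_re_le_norm z).trans_eq hz₁]
  · simp only [hz₁, or_false, false_or]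
    refine and_congr_right fun him => ?_
    obtain ⟨x, rfl⟩ : ∃ x : ℝ, z = x := ⟨z.re, Complex.ext rfl him⟩
    rw [← ofReal_inv, ← ofReal_add, ofReal_re, abs_add_inv, norm_real, Real.norm_eq_abs,
      add_inv_le_two_mul_iff (abs_pos.2 (by exact_mod_cast hz)) hq₀_nonneg hq₀_sq]
end

section
/- Let r ∈ ℝ with r > 1, let q₀ = √(r² − 1), and let ζ ∈ ℂ with rζ ≠ 1. Then |ζ(ζ − r)/(rζ − 1)| ≤ 1 if and only if (|ζ| − 1)·(|ζ − r| − q₀) ≤ 0. -/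
open Complex

theorem sq_norm_mul_sub_one_sub_sq_norm_mul (r : ℝ) (ζ : ℂ) :
    ‖(r : ℂ) * ζ - 1‖ ^ 2 - (‖ζ‖ * ‖ζ - r‖) ^ 2 =
      -((‖ζ‖ ^ 2 - 1) * (‖ζ - r‖ ^ 2 - (r ^ 2 - 1))) := by
  simp only [mul_pow, Complex.sq_norm, Complex.normSq_apply, sub_re, sub_im, mul_re, mul_im,
    ofReal_re, ofReal_im, one_re, one_im]
  ring

theorem norm_mul_norm_sub_le_norm_iff (r : ℝ) (ζ : ℂ) :
    ‖ζ‖ * ‖ζ - r‖ ≤ ‖(r : ℂ) * ζ - 1‖ ↔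
      (‖ζ‖ ^ 2 - 1) * (‖ζ - r‖ ^ 2 - (r ^ 2 - 1)) ≤ 0 := by
  rw [← pow_le_pow_iff_left₀ (by positivity) (norm_nonneg _) two_ne_zero, ← sub_nonneg,
    sq_norm_mul_sub_one_sub_sq_norm_mul, neg_nonneg]

theorem sq_sub_one_mul_sq_sub_sq_nonpos_iff {a b q : ℝ} (ha : 0 ≤ a) (hb : 0 ≤ b) (hq : 0 < q) :
    (a ^ 2 - 1) * (b ^ 2 - q ^ 2) ≤ 0 ↔ (a - 1) * (b - q) ≤ 0 := by
  have hpos : 0 < (a + 1) * (b + q) := by positivity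
  have hfactor : (a ^ 2 - 1) * (b ^ 2 - q ^ 2) = (a - 1) * (b - q) * ((a + 1) * (b + q)) := by
    ring
  rw [hfactor, ← neg_nonneg, ← neg_mul, mul_nonneg_iff_of_pos_right hpos, neg_nonneg]

theorem stmt_7 (r : ℝ) (hr : 1 < r) (q₀ : ℝ) (hq₀ : q₀ = Real.sqrt (r ^ 2 - 1))
    (ζ : ℂ) (hζ : (r : ℂ) * ζ ≠ 1) :
    ‖ζ * (ζ - r) / ((r : ℂ) * ζ - 1)‖ ≤ 1 ↔
      (‖ζ‖ - 1) * (‖ζ - r‖ - q₀) ≤ 0 := by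
  have hr2 : 0 < r ^ 2 - 1 := by nlinarith
  have hq₀sq : q₀ ^ 2 = r ^ 2 - 1 := hq₀ ▸ Real.sq_sqrt hr2.le
  have hq₀pos : 0 < q₀ := hq₀ ▸ Real.sqrt_pos.mpr hr2
  rw [norm_div, norm_mul, div_le_one (norm_pos_iff.mpr (sub_ne_zero.mpr hζ)),
    norm_mul_norm_sub_le_norm_iff, ← hq₀sq]
  exact sq_sub_one_mul_sq_sub_sq_nonpos_iff (norm_nonneg _) (norm_nonneg _) hq₀pos
end

section
/- Let a : ℤ → ℝ be nonnegative and summable, and let c : ℤ → ℝ be nonnegative and bounded. If for every n ∈ ℤ one has c n ≤ Σ_{k < n} (a k)·(c k) (the sum over all integers k < n, which converges), then c n = 0 for all n ∈ ℤ. -/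
theorem stmt_12 (a : ℤ → ℝ) (ha0 : ∀ k, 0 ≤ a k) (ha : Summable a)
    (c : ℤ → ℝ) (hc0 : ∀ n, 0 ≤ c n) (hcb : ∃ B : ℝ, ∀ n, c n ≤ B)
    (h : ∀ n : ℤ, c n ≤ ∑' k : {k : ℤ // k < n}, a k.1 * c k.1) :
    ∀ n : ℤ, c n = 0 := by
  obtain ⟨B, hB⟩ := hcb
  have hB0 : (0:ℝ) ≤ B := le_trans (hc0 0) (hB 0)
  have hf : Summable (fun k => a k * c k) :=
    Summable.of_nonneg_of_le (fun k => mul_nonneg (ha0 k) (hc0 k))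
      (fun k => mul_le_mul_of_nonneg_left (hB k) (ha0 k)) (ha.mul_right B)
  -- subset monotonicity of tsum for nonneg functions
  have suble : ∀ (g : ℤ → ℝ), (∀ k, 0 ≤ g k) → Summable g →
      ∀ (S T : Set ℤ), S ⊆ T → (∑' k : S, g k) ≤ ∑' k : T, g k := by
    intro g hg hsum S T hST
    rw [tsum_subtype, tsum_subtype]
    exact Summable.tsum_le_tsum
      (fun k => Set.indicator_le_indicator_of_subset hST (fun x => hg x) k)
      (hsum.indicator S) (hsum.indicator T)
  -- choose a finite set outside which a sums to < 1/2
  obtain ⟨s, hs⟩ :=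
    ((tendsto_tsum_compl_atTop_zero a).eventually_lt_const
      (by norm_num : (0:ℝ) < 1/2)).exists
  set N : ℤ := -((s.sup Int.natAbs : ℕ) : ℤ) with hNdef
  have hNs : ∀ k ∈ s, N ≤ k := by
    intro k hk
    have h1 : (k.natAbs : ℤ) ≤ (s.sup Int.natAbs : ℕ) := by
      exact_mod_cast Finset.le_sup (f := Int.natAbs) hk
    have h2 : -(k.natAbs : ℤ) ≤ k := by
      rcases Int.natAbs_eq k with h'|h' <;> omega
    omega
  set q := ∑' k : {k : ℤ // k < N}, a k.1 with hqdef
  have hq0 : 0 ≤ q := tsum_nonneg (fun k => ha0 k.1)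
  have hq : q < 1/2 := by
    refine lt_of_le_of_lt ?_ hs
    have hsub : {k : ℤ | k < N} ⊆ {k : ℤ | k ∉ s} := by
      intro k hk hks
      exact absurd hk (not_lt.mpr (hNs k hks))
    exact suble a ha0 ha _ _ hsub
  have hqn : ∀ n : ℤ, n ≤ N → (∑' k : {k : ℤ // k < n}, a k.1) ≤ q := by
    intro n hn
    exact suble a ha0 ha {k : ℤ | k < n} {k : ℤ | k < N}
      (fun k hk => lt_of_lt_of_le hk hn)
  have pow_bound : ∀ m : ℕ, ∀ n : ℤ, n ≤ N → c n ≤ q ^ m * B := by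
    intro m
    induction m with
    | zero => intro n _; simpa using hB n
    | succ m ih =>
      intro n hn
      calc c n ≤ ∑' k : {k : ℤ // k < n}, a k.1 * c k.1 := h n
        _ ≤ ∑' k : {k : ℤ // k < n}, a k.1 * (q ^ m * B) := by
            refine Summable.tsum_le_tsum ?_ (hf.subtype _) ((ha.mul_right (q ^ m * B)).subtype _)
            intro k
            exact mul_le_mul_of_nonneg_left
              (ih k.1 (le_trans (le_of_lt k.2) hn)) (ha0 k.1)
        _ = (∑' k : {k : ℤ // k < n}, a k.1) * (q ^ m * B) := tsum_mul_right
        _ ≤ q * (q ^ m * B) := by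
            exact mul_le_mul_of_nonneg_right (hqn n hn) (by positivity)
        _ = q ^ (m + 1) * B := by ring
  have hzero : ∀ n : ℤ, n ≤ N → c n = 0 := by
    intro n hn
    refine le_antisymm ?_ (hc0 n)
    have hlim : Filter.Tendsto (fun m : ℕ => q ^ m * B) Filter.atTop (nhds 0) := by
      have := (tendsto_pow_atTop_nhds_zero_of_lt_one hq0 (by linarith)).mul_const B
      simpa using this
    exact ge_of_tendsto' hlim (fun m => pow_bound m n hn)
  have up : ∀ n : ℤ, N ≤ n → ∀ k ≤ n, c k = 0 := by
    refine Int.le_induction (fun k hk => hzero k hk) ?_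
    intro n _hn ih k hk
    rcases lt_or_eq_of_le hk with h' | h'
    · exact ih k (by omega)
    · subst h'
      refine le_antisymm ?_ (hc0 _)
      calc c (n + 1) ≤ ∑' j : {j : ℤ // j < n + 1}, a j.1 * c j.1 := h (n + 1)
        _ = ∑' _j : {j : ℤ // j < n + 1}, (0:ℝ) := by
            refine tsum_congr ?_
            intro j
            rw [ih j.1 (by omega), mul_zero]
        _ = 0 := tsum_zero
  intro n
  rcases le_total n N with hn | hn
  · exact hzero n hn
  · exact up n hn n le_rfl
end
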